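/- arXiv:2005.13885 — 2 statements merged into one kernel-verified Lean document; each statement's English description precedes it below -/
import Mathlib

section
/- The composition s ∘ h : ℝ^k → ℝ^k, where h is the element-wise hyperbolic tangent and s the squashing function, is a homeomorphism from ℝ^k onto the open Euclidean unit ball {x ∈ ℝ^k : ‖x‖_2 < 1}. -/
/-- The sup norm `‖x‖_∞ = max_i |x_i|` of a vector in Euclidean space. -/
noncomputable def supNorm {k : ℕ} (x : EuclideanSpace ℝ (Fin k)) : ℝ :=
  ‖(WithLp.equiv 2 (Fin k → ℝ)) x‖

/-- The element-wise hyperbolic tangent map `h`. -/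
noncomputable def tanhMap (k : ℕ) (x : EuclideanSpace ℝ (Fin k)) :
    EuclideanSpace ℝ (Fin k) := WithLp.toLp 2 (fun i => Real.tanh (x i))

open Classical in
/-- The squashing function `s(x) = x · (‖x‖_∞ / ‖x‖_2)` for `x ≠ 0`, `s(0) = 0`. -/
noncomputable def squash {k : ℕ} (x : EuclideanSpace ℝ (Fin k)) :
    EuclideanSpace ℝ (Fin k) :=
  if x = 0 then 0 else (supNorm x / ‖x‖) • x

/-!
Coordinatewise, `tanh` is an order isomorphism `ℝ ≃o (-1, 1)`, hence a homeomorphism of `ℝ^k`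
onto the open unit cube of the sup norm. The squashing function rescales every ray from the origin
so that the sup norm of a point becomes its Euclidean norm: it is the gauge rescaling between the
sup-norm unit ball and the Euclidean unit ball, both convex bounded neighbourhoods of `0`, so it
is a homeomorphism of `ℝ^k` carrying the open cube onto the open Euclidean ball.
-/

open Metric Set Topology

theorem gauge_preimage_ball_zero_one {E F G : Type*} [AddCommGroup E] [Module ℝ E]
    [SeminormedAddCommGroup F] [NormedSpace ℝ F] [FunLike G E F] [LinearMapClass G ℝ E F]
    (f : G) (x : E) : gauge (f ⁻¹' ball 0 1) x = ‖f x‖ := by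
  have hball : ((normSeminorm ℝ F).comp (f : E →ₗ[ℝ] F)).ball 0 1 = f ⁻¹' ball 0 1 := by
    rw [Seminorm.ball_comp, map_zero, ball_normSeminorm, LinearMap.coe_coe]
  rw [← hball, Seminorm.gauge_ball]
  rfl

namespace ContinuousLinearEquiv

variable {E F : Type*} [NormedAddCommGroup E] [NormedSpace ℝ E]
  [NormedAddCommGroup F] [NormedSpace ℝ F] (e : E ≃L[ℝ] F)

noncomputable def normRescaleHomeomorph : E ≃ₜ E :=
  have hconvex : Convex ℝ (e ⁻¹' ball 0 1) :=
    (convex_ball 0 1).linear_preimage (e : E →ₗ[ℝ] F)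
  have hnhds : e ⁻¹' ball 0 1 ∈ 𝓝 0 :=
    e.continuous.continuousAt.preimage_mem_nhds (by simpa using ball_mem_nhds (0 : F) one_pos)
  have hbdd : Bornology.IsVonNBounded ℝ (e ⁻¹' ball 0 1) := by
    rw [← e.image_symm_eq_preimage]
    exact (NormedSpace.isVonNBounded_ball ℝ F 1).image (e.symm : F →L[ℝ] E)
  gaugeRescaleHomeomorph _ _ hconvex hnhds hbdd (convex_ball 0 1) (ball_mem_nhds 0 one_pos)
    (NormedSpace.isVonNBounded_ball ℝ E 1)

theorem normRescaleHomeomorph_apply (x : E) :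
    e.normRescaleHomeomorph x = (‖e x‖ / ‖x‖) • x := by
  show gaugeRescale _ _ x = _
  rw [gaugeRescale, gauge_preimage_ball_zero_one e, gauge_ball zero_le_one, div_one]

theorem norm_normRescaleHomeomorph (x : E) : ‖e.normRescaleHomeomorph x‖ = ‖e x‖ := by
  rcases eq_or_ne x 0 with rfl | hx
  · simp [normRescaleHomeomorph_apply]
  rw [normRescaleHomeomorph_apply, norm_smul, norm_div, norm_norm, norm_norm,
    div_mul_cancel₀ _ (norm_ne_zero_iff.2 hx)]

noncomputable def unitBallHomeomorph : {y : F // ‖y‖ < 1} ≃ₜ {x : E // ‖x‖ < 1} :=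
  (e.symm.toHomeomorph.subtype (q := fun x => ‖e x‖ < 1) fun y => by simp).trans <|
    e.normRescaleHomeomorph.subtype fun x => by rw [norm_normRescaleHomeomorph]

theorem coe_unitBallHomeomorph (y : {y : F // ‖y‖ < 1}) :
    (e.unitBallHomeomorph y : E) = (‖(y : F)‖ / ‖e.symm y‖) • e.symm y := by
  simp [unitBallHomeomorph, normRescaleHomeomorph_apply]

end ContinuousLinearEquiv

namespace Real

theorem strictMono_tanh : StrictMono tanh := fun x y hxy => by
  by_contra! h
  exact hxy.not_ge <| by
    simpa only [artanh_tanh] using artanh_le_artanh (neg_one_lt_tanh y) (tanh_lt_one x) h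

noncomputable def tanhOrderIso : ℝ ≃o Ioo (-1 : ℝ) 1 :=
  StrictMono.orderIsoOfSurjective
    (codRestrict tanh _ fun x => ⟨neg_one_lt_tanh x, tanh_lt_one x⟩) strictMono_tanh fun y => by
      obtain ⟨x, -, hx⟩ := tanh_surjOn y.2
      exact ⟨x, Subtype.ext hx⟩

end Real

open Real in
noncomputable def piTanhHomeomorph (ι : Type*) [Fintype ι] :
    (ι → ℝ) ≃ₜ {y : ι → ℝ // ‖y‖ < 1} where
  toFun x := ⟨fun i => tanh (x i),
    (pi_norm_lt_iff one_pos).2 fun i => by simpa only [norm_eq_abs] using abs_tanh_lt_one (x i)⟩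
  invFun y i := tanhOrderIso.symm ⟨y.1 i, abs_lt.1 <| (norm_le_pi_norm y.1 i).trans_lt y.2⟩
  left_inv x := funext fun i => tanhOrderIso.symm_apply_apply (x i)
  right_inv y :=
    Subtype.ext <| funext fun i => congrArg Subtype.val (tanhOrderIso.apply_symm_apply _)
  continuous_toFun := by
    refine Continuous.subtype_mk (continuous_pi fun i => ?_) _
    exact continuous_subtype_val.comp <|
      tanhOrderIso.toHomeomorph.continuous.comp (continuous_apply i)
  continuous_invFun := by
    refine continuous_pi fun i => tanhOrderIso.toHomeomorph.symm.continuous.comp ?_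
    exact ((continuous_apply i).comp continuous_subtype_val).subtype_mk _

theorem squash_eq_smul {k : ℕ} (x : EuclideanSpace ℝ (Fin k)) :
    squash x = (supNorm x / ‖x‖) • x := by
  rw [squash]
  split_ifs with hx <;> simp [hx]

/-- the composition `s ∘ h` is a homeomorphism from `ℝ^k` onto the
open Euclidean unit ball `{x : ‖x‖_2 < 1}`. -/
theorem squash_comp_tanh_homeomorph_onto_euclidean_ball (k : ℕ) :
    ∃ e : EuclideanSpace ℝ (Fin k) ≃ₜ {x : EuclideanSpace ℝ (Fin k) // ‖x‖ < 1},
      ∀ x : EuclideanSpace ℝ (Fin k), (e x : EuclideanSpace ℝ (Fin k)) = squash (tanhMap k x) := by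
  refine ⟨(PiLp.homeomorph 2 _).trans <| (piTanhHomeomorph (Fin k)).trans
    (PiLp.continuousLinearEquiv 2 ℝ _).unitBallHomeomorph, fun x => ?_⟩
  rw [Homeomorph.trans_apply, Homeomorph.trans_apply,
    ContinuousLinearEquiv.coe_unitBallHomeomorph, squash_eq_smul]
  rfl
end

section
/- The squared Poincaré distance is smooth on the ball: the function (u, v) ↦ d_p(u, v)² = (arcosh(1 + 2‖u - v‖_2² / ((1 - ‖u‖_2²)(1 - ‖v‖_2²))))² is infinitely differentiable (C^∞) on B^n × B^n, where B^n = {y ∈ ℝ^n : ‖y‖_2 < 1}, including at points of the diagonal u = v. -/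
open scoped Topology

/-- The inverse hyperbolic cosine, `arcosh t = log (t + √(t² - 1))`. -/
noncomputable def arcosh (t : ℝ) : ℝ := Real.log (t + Real.sqrt (t ^ 2 - 1))

namespace PoincareAux

/-- coefficients of the series `∑ yᵏ/(2k)!`, whose sum is `cosh √y`. -/
noncomputable def cseq : ℕ → ℝ := fun k => ((Nat.factorial (2 * k) : ℕ) : ℝ)⁻¹

lemma cseq_ne_zero (k : ℕ) : cseq k ≠ 0 :=
  inv_ne_zero (by exact_mod_cast (Nat.factorial_pos (2 * k)).ne')

lemma radius_top : (FormalMultilinearSeries.ofScalars ℝ cseq).radius = ⊤ := by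
  apply FormalMultilinearSeries.ofScalars_radius_eq_top_of_tendsto
  · exact Filter.Eventually.of_forall fun k => cseq_ne_zero k
  · have hb : ∀ n : ℕ, ‖cseq (n + 1)‖ / ‖cseq n‖ ≤ 1 / (n + 1 : ℝ) := by
      intro n
      have h1 : (0:ℝ) < ((Nat.factorial (2 * n) : ℕ) : ℝ) := by
        exact_mod_cast Nat.factorial_pos _
      have h2 : (0:ℝ) < ((Nat.factorial (2 * (n+1)) : ℕ) : ℝ) := by
        exact_mod_cast Nat.factorial_pos _
      have hfac : (n + 1) * Nat.factorial (2 * n) ≤ Nat.factorial (2 * (n + 1)) := by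
        have h3 : 2 * (n + 1) = (2 * n + 1) + 1 := by ring
        rw [h3, Nat.factorial_succ, Nat.factorial_succ]
        calc (n + 1) * Nat.factorial (2 * n)
            ≤ ((2 * n + 1 + 1) * (2 * n + 1)) * Nat.factorial (2 * n) :=
              Nat.mul_le_mul_right _ (by nlinarith)
          _ = (2 * n + 1 + 1) * ((2 * n + 1) * Nat.factorial (2 * n)) := by ring
      have heq : ‖cseq (n + 1)‖ / ‖cseq n‖
          = ((Nat.factorial (2 * n) : ℕ) : ℝ) / ((Nat.factorial (2 * (n+1)) : ℕ) : ℝ) := by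
        simp only [cseq, Real.norm_eq_abs]
        rw [abs_inv, abs_inv, abs_of_pos h1, abs_of_pos h2]
        field_simp
      rw [heq, div_le_div_iff₀ h2 (by positivity)]
      rw [one_mul, mul_comm]
      exact_mod_cast hfac
    have h0 : ∀ n : ℕ, 0 ≤ ‖cseq (n + 1)‖ / ‖cseq n‖ := fun n => by positivity
    simpa [Nat.succ_eq_add_one] using
      squeeze_zero h0 hb tendsto_one_div_add_atTop_nhds_zero_nat

/-- cosh of arcosh for `t ≥ 1`. -/
lemma cosh_arcosh {t : ℝ} (ht : 1 ≤ t) : Real.cosh (arcosh t) = t := by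
  have h1 : (0:ℝ) ≤ t ^ 2 - 1 := by nlinarith
  have hs : Real.sqrt (t ^ 2 - 1) ^ 2 = t ^ 2 - 1 := Real.sq_sqrt h1
  have hs0 : 0 ≤ Real.sqrt (t ^ 2 - 1) := Real.sqrt_nonneg _
  have hpos : 0 < t + Real.sqrt (t ^ 2 - 1) := by nlinarith
  have hinv : (t + Real.sqrt (t ^ 2 - 1))⁻¹ = t - Real.sqrt (t ^ 2 - 1) := by
    apply inv_eq_of_mul_eq_one_right
    nlinarith
  rw [arcosh, Real.cosh_eq, Real.exp_log hpos, Real.exp_neg, Real.exp_log hpos, hinv]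
  ring

lemma arcosh_nonneg {t : ℝ} (ht : 1 ≤ t) : 0 ≤ arcosh t := by
  have hs0 : 0 ≤ Real.sqrt (t ^ 2 - 1) := Real.sqrt_nonneg _
  exact Real.log_nonneg (by linarith)

/-- The sum of the power series evaluated at `x²` is `cosh x`. -/
lemma ofScalarsSum_sq (x : ℝ) :
    FormalMultilinearSeries.ofScalarsSum (E := ℝ) cseq (x ^ 2) = Real.cosh x := by
  rw [FormalMultilinearSeries.ofScalars_sum_eq]
  rw [← (Real.hasSum_cosh x).tsum_eq]
  apply tsum_congr
  intro k
  rw [smul_eq_mul, ← pow_mul]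
  simp only [cseq]
  rw [inv_mul_eq_div]

lemma key {t : ℝ} (ht : 1 ≤ t) :
    FormalMultilinearSeries.ofScalarsSum (E := ℝ) cseq (arcosh t ^ 2) = t := by
  rw [ofScalarsSum_sq, cosh_arcosh ht]

lemma continuousAt_arcosh_sq : ContinuousAt (fun t : ℝ => arcosh t ^ 2) 1 := by
  have h1 : ContinuousAt (fun t : ℝ => t + Real.sqrt (t ^ 2 - 1)) 1 := by fun_prop
  have h2 : ((1:ℝ) + Real.sqrt ((1:ℝ) ^ 2 - 1)) ≠ 0 := by
    norm_num
  have h3 : ContinuousAt (Real.log ∘ fun t : ℝ => t + Real.sqrt (t ^ 2 - 1)) 1 :=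
    ContinuousAt.comp (Real.continuousAt_log h2) h1
  have h4 : ContinuousAt (fun t : ℝ => arcosh t) 1 := h3
  exact h4.pow 2

lemma arcosh_sq_one : arcosh (1:ℝ) ^ 2 = 0 := by
  simp [arcosh]

/-- There is a function `G`, smooth (in fact analytic) at `1`, which agrees with
`arcosh t ^ 2` for `t ≥ 1` near `1`. -/
lemma exists_G : ∃ G : ℝ → ℝ, ContDiffAt ℝ (⊤ : ℕ∞) G 1 ∧
    ∀ᶠ t in 𝓝 (1:ℝ), 1 ≤ t → arcosh t ^ 2 = G t := by
  set p := FormalMultilinearSeries.ofScalars ℝ cseq with hp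
  set F := FormalMultilinearSeries.ofScalarsSum (E := ℝ) cseq with hFdef
  have hball : HasFPowerSeriesOnBall F p 0 p.radius :=
    p.hasFPowerSeriesOnBall (by rw [radius_top]; exact ENNReal.zero_lt_top)
  have hat : HasFPowerSeriesAt F p 0 := hball.hasFPowerSeriesAt
  have hFc : ContDiffAt ℝ (⊤ : ℕ∞) F 0 := hat.analyticAt.contDiffAt
  have hd : HasDerivAt F (2⁻¹ : ℝ) 0 := by
    have := hat.hasDerivAt
    have hcoeff : (p 1 fun _ => (1:ℝ)) = 2⁻¹ := by
      rw [hp, FormalMultilinearSeries.ofScalars_apply_eq]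
      simp [cseq, Nat.factorial]
    rwa [hcoeff] at this
  have hFe : HasFDerivAt F
      ((ContinuousLinearEquiv.unitsEquivAut ℝ (Units.mk0 (2⁻¹ : ℝ) (by norm_num))) :
        ℝ →L[ℝ] ℝ) 0 := hd.hasFDerivAt_equiv (by norm_num)
  set G := hFc.localInverse hFe (by simp) with hGdef
  have hG : ContDiffAt ℝ (⊤ : ℕ∞) G (F 0) := hFc.to_localInverse hFe (by simp)
  have hF0 : F 0 = 1 := by
    rw [hFdef, FormalMultilinearSeries.ofScalarsSum_zero]
    simp [cseq, Nat.factorial]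
  refine ⟨G, by rwa [hF0] at hG, ?_⟩
  have hs : HasStrictFDerivAt F
      ((ContinuousLinearEquiv.unitsEquivAut ℝ (Units.mk0 (2⁻¹ : ℝ) (by norm_num))) :
        ℝ →L[ℝ] ℝ) 0 := hFc.hasStrictFDerivAt' hFe (by simp)
  have hleft : ∀ᶠ y in 𝓝 (0:ℝ), G (F y) = y := hs.eventually_left_inverse
  have htend : Filter.Tendsto (fun t : ℝ => arcosh t ^ 2) (𝓝 1) (𝓝 0) := by
    have := continuousAt_arcosh_sq
    rwa [ContinuousAt, arcosh_sq_one] at this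
  filter_upwards [htend.eventually hleft] with t h ht
  have hk := key (t := t) ht
  rw [← hFdef] at hk
  rw [← h, hk]

/-- `arcosh t ^ 2` is smooth at any `t > 1`. -/
lemma contDiffAt_arcosh_sq {t : ℝ} (ht : 1 < t) :
    ContDiffAt ℝ (⊤ : ℕ∞) (fun t : ℝ => arcosh t ^ 2) t := by
  have h1 : (0:ℝ) < t ^ 2 - 1 := by nlinarith
  have hs0 : 0 ≤ Real.sqrt (t ^ 2 - 1) := Real.sqrt_nonneg _
  have hinner : ContDiffAt ℝ (⊤ : ℕ∞) (fun t : ℝ => t + Real.sqrt (t ^ 2 - 1)) t := by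
    refine contDiffAt_id.add ?_
    exact (Real.contDiffAt_sqrt h1.ne').comp t
      (((contDiff_id (E := ℝ)).pow 2).contDiffAt.sub contDiffAt_const)
  have hposv : (0:ℝ) < t + Real.sqrt (t ^ 2 - 1) := by linarith
  have hlog : ContDiffAt ℝ (⊤ : ℕ∞) (fun t : ℝ => arcosh t) t := by
    simp only [arcosh]
    exact (Real.contDiffAt_log.mpr hposv.ne').comp t hinner
  exact hlog.pow 2

end PoincareAux

open PoincareAux in
/-- the squared Poincaré distance
`(u, v) ↦ (arcosh (1 + 2‖u - v‖² / ((1 - ‖u‖²)(1 - ‖v‖²))))²` is infinitely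
differentiable on `B^n × B^n`, including at points of the diagonal `u = v`. -/
theorem poincare_sq_dist_smooth (n : ℕ) :
    ContDiffOn ℝ (⊤ : ℕ∞)
      (fun p : EuclideanSpace ℝ (Fin n) × EuclideanSpace ℝ (Fin n) =>
        (arcosh (1 + 2 * ‖p.1 - p.2‖ ^ 2 /
          ((1 - ‖p.1‖ ^ 2) * (1 - ‖p.2‖ ^ 2)))) ^ 2)
      (Metric.ball (0 : EuclideanSpace ℝ (Fin n)) 1 ×ˢ
        Metric.ball (0 : EuclideanSpace ℝ (Fin n)) 1) := by
  set E := EuclideanSpace ℝ (Fin n)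
  set S : Set (E × E) := Metric.ball (0 : E) 1 ×ˢ Metric.ball (0 : E) 1 with hS
  set q : E × E → ℝ := fun p =>
    1 + 2 * ‖p.1 - p.2‖ ^ 2 / ((1 - ‖p.1‖ ^ 2) * (1 - ‖p.2‖ ^ 2)) with hq
  have hSopen : IsOpen S := Metric.isOpen_ball.prod Metric.isOpen_ball
  have hdenom : ∀ p ∈ S, 0 < (1 - ‖p.1‖ ^ 2) * (1 - ‖p.2‖ ^ 2) := by
    rintro p ⟨h1, h2⟩
    rw [Metric.mem_ball, dist_zero_right] at h1 h2
    have e1 : ‖p.1‖ ^ 2 < 1 := by nlinarith [norm_nonneg p.1]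
    have e2 : ‖p.2‖ ^ 2 < 1 := by nlinarith [norm_nonneg p.2]
    nlinarith
  have hq1 : ∀ p ∈ S, 1 ≤ q p := by
    intro p hp
    have := hdenom p hp
    have hnum : (0:ℝ) ≤ 2 * ‖p.1 - p.2‖ ^ 2 := by positivity
    have : 0 ≤ 2 * ‖p.1 - p.2‖ ^ 2 / ((1 - ‖p.1‖ ^ 2) * (1 - ‖p.2‖ ^ 2)) :=
      div_nonneg hnum this.le
    simp only [hq]
    linarith
  have hqc : ∀ p ∈ S, ContDiffAt ℝ (⊤ : ℕ∞) q p := by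
    intro p hp
    have hnum : ContDiff ℝ (⊤ : ℕ∞) (fun p : E × E => 2 * ‖p.1 - p.2‖ ^ 2) :=
      contDiff_const.mul ((contDiff_norm_sq ℝ).comp (contDiff_fst.sub contDiff_snd))
    have hden : ContDiff ℝ (⊤ : ℕ∞) (fun p : E × E => (1 - ‖p.1‖ ^ 2) * (1 - ‖p.2‖ ^ 2)) :=
      (contDiff_const.sub ((contDiff_norm_sq ℝ).comp contDiff_fst)).mul
        (contDiff_const.sub ((contDiff_norm_sq ℝ).comp contDiff_snd))
    exact contDiffAt_const.add
      ((hnum.contDiffAt.div hden.contDiffAt (hdenom p hp).ne'))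
  intro p hp
  apply ContDiffAt.contDiffWithinAt
  rcases eq_or_lt_of_le (hq1 p hp) with h | h
  · -- diagonal-like case : q p = 1
    obtain ⟨G, hG, hGe⟩ := exists_G
    have hqp : q p = 1 := h.symm
    have hGq : ContDiffAt ℝ (⊤ : ℕ∞) (G ∘ q) p := by
      refine ContDiffAt.comp p ?_ (hqc p hp)
      rwa [hqp]
    refine hGq.congr_of_eventuallyEq ?_
    have hev : ∀ᶠ x in 𝓝 p, 1 ≤ q x → arcosh (q x) ^ 2 = G (q x) := by
      have hcont : ContinuousAt q p := (hqc p hp).continuousAt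
      have : Filter.Tendsto q (𝓝 p) (𝓝 1) := by
        rw [← hqp]; exact hcont
      exact this.eventually hGe
    filter_upwards [hev, hSopen.mem_nhds hp] with x hx hxS
    exact hx (hq1 x hxS)
  · -- off-diagonal case : q p > 1
    exact (contDiffAt_arcosh_sq h).comp p (hqc p hp)
end
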